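/- For every integer k ≥ 3, the satellite graph S_{2k+1} is a nut graph: the kernel of its adjacency matrix over ℝ is one-dimensional, spanned by the vector taking value +1 on each u_i, value −1 on each w_i, and value −1 on d, and every nonzero kernel vector has all entries nonzero. -/

import Mathlib

/-- Vertices of the satellite graph: the dominating vertex `d = Sum.inl ()`,
the cycle vertices `u i = Sum.inr (Sum.inl i)` and the pendant-type vertices
`w i = Sum.inr (Sum.inr i)`. -/
abbrev SatV (k : ℕ) := Unit ⊕ Fin k ⊕ Fin k

/-- Generating relation for the satellite graph `S_{2k+1}`: `d` is adjacent to every other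
vertex, `u_1, …, u_k` form a cycle, and `u_i` is adjacent to `w_i`. -/
def satRel (k : ℕ) : SatV k → SatV k → Prop
  | Sum.inl _, _ => True
  | Sum.inr (Sum.inl i), Sum.inr (Sum.inl j) => (j : ℕ) = ((i : ℕ) + 1) % k
  | Sum.inr (Sum.inl i), Sum.inr (Sum.inr j) => i = j
  | _, _ => False

/-- The satellite graph `S_{2k+1}` on `2k+1` vertices. -/
def satGraph (k : ℕ) : SimpleGraph (SatV k) := SimpleGraph.fromRel (satRel k)

noncomputable instance (k : ℕ) : DecidableRel (satGraph k).Adj := Classical.decRel _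


/-- The vector taking value `+1` on each `u_i`, `-1` on each `w_i` and `-1` on `d`. -/
def satKer (k : ℕ) : SatV k → ℝ
  | Sum.inl _ => -1
  | Sum.inr (Sum.inl _) => 1
  | Sum.inr (Sum.inr _) => -1

/-! A kernel vector `y` satisfies `y (w i) + y d = 0` at each pendant vertex, so it is constant,
equal to `-y d`, on the cycle. The cycle is 2-regular because `k ≥ 3`, so the row of `u i` reads
`y d - 2 y d + y (w i) = 0`, i.e. `y (w i) = y d`. Thus `y = -y d • satKer`, and `satKer` itself
lies in the kernel and has no zero entry. -/

open SimpleGraph Matrix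

theorem Fin.val_eq_add_one_mod_iff {n : ℕ} {i j : Fin (n + 1)} :
    (j : ℕ) = ((i : ℕ) + 1) % (n + 1) ↔ j = i + 1 := by
  rw [Fin.ext_iff, Fin.val_add, Fin.val_one', Nat.add_mod_mod]

theorem SimpleGraph.cycleGraph_isRegularOfDegree_two {k : ℕ} (hk : 3 ≤ k) :
    (cycleGraph k).IsRegularOfDegree 2 := by
  obtain ⟨n, rfl⟩ := Nat.exists_eq_add_of_le' hk
  exact fun _ => cycleGraph_degree_three_le

theorem apply_ne_zero_of_mem_span_singleton {ι R : Type*} [Semiring R] [NoZeroDivisors R]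
    {x y : ι → R} (hx : ∀ i, x i ≠ 0) (hy : y ∈ Submodule.span R {x}) (hy0 : y ≠ 0) (i : ι) :
    y i ≠ 0 := by
  obtain ⟨c, rfl⟩ := Submodule.mem_span_singleton.1 hy
  have hc : c ≠ 0 := by rintro rfl; exact hy0 (zero_smul R x)
  simpa using mul_ne_zero hc (hx i)

theorem satKer_apply_ne_zero {k : ℕ} : ∀ v, satKer k v ≠ 0 := by
  rintro (_ | _ | _) <;> simp [satKer]

namespace satGraph

variable {k : ℕ}

@[simp]
theorem adj_inl_left {v : SatV k} : (satGraph k).Adj (.inl ()) v ↔ v ≠ .inl () := by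
  rcases v with _ | _ | _ <;> simp [satGraph, satRel]

@[simp]
theorem adj_inl_right {v : SatV k} : (satGraph k).Adj v (.inl ()) ↔ v ≠ .inl () := by
  rw [adj_comm, adj_inl_left]

theorem adj_inr_inl_inr_inl {i j : Fin k} :
    (satGraph k).Adj (.inr (.inl i)) (.inr (.inl j)) ↔ (cycleGraph k).Adj i j := by
  rcases k with _ | _ | n
  · exact i.elim0
  · simp [Subsingleton.elim (α := Fin 1) i j]
  · simp only [satGraph, fromRel_adj, satRel, cycleGraph_adj, Fin.val_eq_add_one_mod_iff,
      sub_eq_iff_eq_add', ne_eq, Sum.inr.injEq, Sum.inl.injEq]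
    refine ⟨fun h => h.2.symm, fun h => ⟨?_, h.symm⟩⟩
    rcases h with rfl | rfl <;> simp

@[simp]
theorem adj_inr_inl_inr_inr {i j : Fin k} :
    (satGraph k).Adj (.inr (.inl i)) (.inr (.inr j)) ↔ i = j := by
  simp [satGraph, satRel]

@[simp]
theorem adj_inr_inr_inr_inl {i j : Fin k} :
    (satGraph k).Adj (.inr (.inr i)) (.inr (.inl j)) ↔ i = j := by
  simp [satGraph, satRel, eq_comm]

@[simp]
theorem not_adj_inr_inr_inr_inr {i j : Fin k} :
    ¬(satGraph k).Adj (.inr (.inr i)) (.inr (.inr j)) := by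
  simp [satGraph, satRel]

section

variable {α : Type*} [NonAssocSemiring α] (y : SatV k → α)

theorem adjMatrix_mulVec_inl :
    (((satGraph k).adjMatrix α) *ᵥ y) (.inl ()) =
      ∑ i, y (.inr (.inl i)) + ∑ i, y (.inr (.inr i)) := by
  simp [mulVec, dotProduct, Fintype.sum_sum_type]

theorem adjMatrix_mulVec_inr_inl (i : Fin k) :
    (((satGraph k).adjMatrix α) *ᵥ y) (.inr (.inl i)) =
      y (.inl ()) + ((cycleGraph k).adjMatrix α *ᵥ fun j => y (.inr (.inl j))) i +
        y (.inr (.inr i)) := by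
  simp [mulVec, dotProduct, Fintype.sum_sum_type, adj_inr_inl_inr_inl, add_assoc]

theorem adjMatrix_mulVec_inr_inr (i : Fin k) :
    (((satGraph k).adjMatrix α) *ᵥ y) (.inr (.inr i)) = y (.inl ()) + y (.inr (.inl i)) := by
  simp [mulVec, dotProduct, Fintype.sum_sum_type]

end

theorem adjMatrix_mulVec_satKer (hk : 3 ≤ k) : (satGraph k).adjMatrix ℝ *ᵥ satKer k = 0 := by
  ext (⟨⟩ | i | i)
  · rw [adjMatrix_mulVec_inl]
    simp [satKer]
  · rw [adjMatrix_mulVec_inr_inl,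
      show (fun j => satKer k (.inr (.inl j))) = Function.const _ 1 from rfl,
      adjMatrix_mulVec_const_apply_of_regular (cycleGraph_isRegularOfDegree_two hk)]
    norm_num [satKer]
  · rw [adjMatrix_mulVec_inr_inr]
    simp [satKer]

theorem eq_smul_satKer_of_adjMatrix_mulVec_eq_zero (hk : 3 ≤ k) {y : SatV k → ℝ}
    (hy : (satGraph k).adjMatrix ℝ *ᵥ y = 0) : y = -y (.inl ()) • satKer k := by
  have hu (i : Fin k) : y (.inr (.inl i)) = -y (.inl ()) := by
    have := congrFun hy (.inr (.inr i))
    rw [adjMatrix_mulVec_inr_inr, Pi.zero_apply] at this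
    linear_combination this
  have hw (i : Fin k) : y (.inr (.inr i)) = y (.inl ()) := by
    have := congrFun hy (.inr (.inl i))
    rw [adjMatrix_mulVec_inr_inl,
      show (fun j => y (.inr (.inl j))) = Function.const _ (-y (.inl ())) from funext hu,
      adjMatrix_mulVec_const_apply_of_regular (cycleGraph_isRegularOfDegree_two hk),
      Pi.zero_apply] at this
    linear_combination this
  ext (⟨⟩ | i | i) <;> simp [satKer, hu, hw]

theorem ker_adjMatrix_mulVecLin (hk : 3 ≤ k) :
    LinearMap.ker ((satGraph k).adjMatrix ℝ).mulVecLin = Submodule.span ℝ {satKer k} := by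
  refine le_antisymm (fun y hy => Submodule.mem_span_singleton.2 ⟨-y (.inl ()), ?_⟩) ?_
  · exact (eq_smul_satKer_of_adjMatrix_mulVec_eq_zero hk hy).symm
  · exact (Submodule.span_singleton_le_iff_mem _ _).2 (adjMatrix_mulVec_satKer hk)

end satGraph

theorem satGraph_isNut (k : ℕ) (hk : 3 ≤ k) :
    LinearMap.ker ((satGraph k).adjMatrix ℝ).mulVecLin = Submodule.span ℝ {satKer k} ∧
    Module.finrank ℝ ↥(LinearMap.ker ((satGraph k).adjMatrix ℝ).mulVecLin) = 1 ∧
    (∀ y : SatV k → ℝ, ((satGraph k).adjMatrix ℝ).mulVec y = 0 → y ≠ 0 → ∀ v, y v ≠ 0) := by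
  have hker := satGraph.ker_adjMatrix_mulVecLin hk
  have hne : satKer k ≠ 0 := fun h => satKer_apply_ne_zero (.inl ()) (congrFun h _)
  refine ⟨hker, hker ▸ finrank_span_singleton hne, fun y hy => ?_⟩
  exact apply_ne_zero_of_mem_span_singleton satKer_apply_ne_zero (hker ▸ hy)
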